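/- Let (M, λ_i) be an AP-space on ℝⁿ (n ≥ 2) and let λ̄_i = e^{−ρ} λ_i be a conformal change with smooth conformal factor ρ. Then the Levi-Civita covariant derivative of the contravariant contracted torsion transforms as C̄^α_{;;ν} = e^{−2ρ}{ C^α_{;ν} + (n−1) ρ^α_{;ν} + (δ^α_ν C^ε ρ_ε − C^α ρ_ν − C_ν ρ^α) + (n−1)(δ^α_ν ρ² − 2 ρ^α ρ_ν) }, where C^α := g^{αε} C_ε, ρ^α := g^{αε} ρ_ε, ρ_ν := ∂ρ/∂x^ν, ρ² := ρ_ε ρ^ε, and for a vector field X^α its covariant derivative with respect to Γ° is X^α_{;ν} := ∂_ν X^α + Γ°^α_{εν} X^ε (with ;; the analogous derivative with respect to the Levi-Civita connection of ḡ = e^{2ρ} g, and C̄^α := ḡ^{αε} C̄_ε). -/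

import Mathlib

open scoped BigOperators

noncomputable section

/-- Kronecker delta as a real number. -/
def kron {n : ℕ} (α μ : Fin n) : ℝ := if α = μ then 1 else 0

/-- Partial derivative `∂_ν f` of a scalar function on ℝⁿ. -/
def pd {n : ℕ} (ν : Fin n) (f : (Fin n → ℝ) → ℝ) (x : Fin n → ℝ) : ℝ :=
  fderiv ℝ f x (Pi.single ν 1)

/-- Weitzenböck connection `Γ^α_{μν} = Σ_i λ_i^α ∂_ν λ_{i,μ}`. -/
def Wconn {n : ℕ} (lam lamCov : Fin n → (Fin n → ℝ) → Fin n → ℝ)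
    (α μ ν : Fin n) (x : Fin n → ℝ) : ℝ :=
  ∑ i, lam i x α * pd ν (fun y => lamCov i y μ) x

/-- Torsion `Λ^α_{μν}` of the Weitzenböck connection. -/
def tors {n : ℕ} (lam lamCov : Fin n → (Fin n → ℝ) → Fin n → ℝ)
    (α μ ν : Fin n) (x : Fin n → ℝ) : ℝ :=
  Wconn lam lamCov α μ ν x - Wconn lam lamCov α ν μ x

/-- Contracted torsion (basic vector) `C_μ = Λ^ε_{εμ}`. -/
def Cvec {n : ℕ} (lam lamCov : Fin n → (Fin n → ℝ) → Fin n → ℝ)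
    (μ : Fin n) (x : Fin n → ℝ) : ℝ :=
  ∑ ε, tors lam lamCov ε ε μ x

/-- Metric `g_{μν} = Σ_i λ_{i,μ} λ_{i,ν}`. -/
def gmet {n : ℕ} (lamCov : Fin n → (Fin n → ℝ) → Fin n → ℝ)
    (μ ν : Fin n) (x : Fin n → ℝ) : ℝ :=
  ∑ i, lamCov i x μ * lamCov i x ν

/-- Inverse metric `g^{μν} = Σ_i λ_i^μ λ_i^ν`. -/
def ginv {n : ℕ} (lam : Fin n → (Fin n → ℝ) → Fin n → ℝ)
    (μ ν : Fin n) (x : Fin n → ℝ) : ℝ :=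
  ∑ i, lam i x μ * lam i x ν

/-- Levi-Civita connection (Christoffel symbols) of the metric `g`. -/
def LC {n : ℕ} (lam lamCov : Fin n → (Fin n → ℝ) → Fin n → ℝ)
    (α μ ν : Fin n) (x : Fin n → ℝ) : ℝ :=
  (1/2) * ∑ ε, ginv lam α ε x *
    (pd μ (fun y => gmet lamCov ε ν y) x + pd ν (fun y => gmet lamCov ε μ y) x
      - pd ε (fun y => gmet lamCov μ ν y) x)

/-- Curvature tensor `R[A]^α_{μνσ}` of connection coefficients `A`. -/
def curv {n : ℕ} (A : Fin n → Fin n → Fin n → (Fin n → ℝ) → ℝ)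
    (α μ ν σ : Fin n) (x : Fin n → ℝ) : ℝ :=
  pd ν (A α μ σ) x - pd σ (A α μ ν) x
    + ∑ ε, A ε μ σ x * A α ε ν x - ∑ ε, A ε μ ν x * A α ε σ x

/-- Conformal change of the contravariant components: `λ̄_i^μ = e^{-ρ} λ_i^μ`. -/
def confLam {n : ℕ} (ρ : (Fin n → ℝ) → ℝ) (lam : Fin n → (Fin n → ℝ) → Fin n → ℝ) :
    Fin n → (Fin n → ℝ) → Fin n → ℝ :=
  fun i x μ => Real.exp (-(ρ x)) * lam i x μ

/-- Conformal change of the covariant components: `λ̄_{i,μ} = e^{ρ} λ_{i,μ}`. -/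
def confLamCov {n : ℕ} (ρ : (Fin n → ℝ) → ℝ) (lamCov : Fin n → (Fin n → ℝ) → Fin n → ℝ) :
    Fin n → (Fin n → ℝ) → Fin n → ℝ :=
  fun i x μ => Real.exp (ρ x) * lamCov i x μ

/-- `ρ^α := g^{αε} ρ_ε`. -/
def rhoUp {n : ℕ} (lam : Fin n → (Fin n → ℝ) → Fin n → ℝ) (ρ : (Fin n → ℝ) → ℝ)
    (α : Fin n) (x : Fin n → ℝ) : ℝ :=
  ∑ ε, ginv lam α ε x * pd ε ρ x

/-- `ρ² := ρ^ε ρ_ε`. -/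
def rhoSq {n : ℕ} (lam : Fin n → (Fin n → ℝ) → Fin n → ℝ) (ρ : (Fin n → ℝ) → ℝ)
    (x : Fin n → ℝ) : ℝ :=
  ∑ ε, rhoUp lam ρ ε x * pd ε ρ x

/-- Covariant derivative of a covector field: `X_{μ|ν} = ∂_ν X_μ − A^ε_{μν} X_ε`. -/
def covD {n : ℕ} (A : Fin n → Fin n → Fin n → (Fin n → ℝ) → ℝ)
    (X : Fin n → (Fin n → ℝ) → ℝ) (μ ν : Fin n) (x : Fin n → ℝ) : ℝ :=
  pd ν (X μ) x - ∑ ε, A ε μ ν x * X ε x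

/-- Covariant derivative of a vector field: `X^α_{|ν} = ∂_ν X^α + A^α_{εν} X^ε`. -/
def covDUp {n : ℕ} (A : Fin n → Fin n → Fin n → (Fin n → ℝ) → ℝ)
    (X : Fin n → (Fin n → ℝ) → ℝ) (α ν : Fin n) (x : Fin n → ℝ) : ℝ :=
  pd ν (X α) x + ∑ ε, A α ε ν x * X ε x

/-- Symmetric part `Γ̂^α_{μν}` of the Weitzenböck connection. -/
def symW {n : ℕ} (lam lamCov : Fin n → (Fin n → ℝ) → Fin n → ℝ)
    (α μ ν : Fin n) (x : Fin n → ℝ) : ℝ :=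
  (1/2) * (Wconn lam lamCov α μ ν x + Wconn lam lamCov α ν μ x)

/-- The conformally invariant tensor `T^α_{μν}`. -/
def Ttens {n : ℕ} (lam lamCov : Fin n → (Fin n → ℝ) → Fin n → ℝ)
    (α μ ν : Fin n) (x : Fin n → ℝ) : ℝ :=
  tors lam lamCov α μ ν x
    - ((n : ℝ) - 1)⁻¹ * (kron α μ * Cvec lam lamCov ν x - kron α ν * Cvec lam lamCov μ x)

/-- The conformally invariant tensor `K^α_{μνσ}`. -/
def Ktens {n : ℕ} (lam lamCov : Fin n → (Fin n → ℝ) → Fin n → ℝ)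
    (α μ ν σ : Fin n) (x : Fin n → ℝ) : ℝ :=
  ((n : ℝ) - 1)⁻¹ *
    (kron α μ * pd σ (Cvec lam lamCov ν) x - kron α μ * pd ν (Cvec lam lamCov σ) x)

/-- The conformal connection `𝚪^α_{μν} = Γ^α_{μν} − (1/(n−1)) δ^α_μ C_ν`. -/
def bConn {n : ℕ} (lam lamCov : Fin n → (Fin n → ℝ) → Fin n → ℝ)
    (α μ ν : Fin n) (x : Fin n → ℝ) : ℝ :=
  Wconn lam lamCov α μ ν x - ((n : ℝ) - 1)⁻¹ * (kron α μ * Cvec lam lamCov ν x)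

/-- The conformal connection `𝚪̂^α_{μν} = Γ̂^α_{μν} − (1/(2(n−1)))(δ^α_μ C_ν + δ^α_ν C_μ)`. -/
def hatConn {n : ℕ} (lam lamCov : Fin n → (Fin n → ℝ) → Fin n → ℝ)
    (α μ ν : Fin n) (x : Fin n → ℝ) : ℝ :=
  symW lam lamCov α μ ν x
    - (2 * ((n : ℝ) - 1))⁻¹ * (kron α μ * Cvec lam lamCov ν x + kron α ν * Cvec lam lamCov μ x)

/-- `C_{μ ĥ|ν}`: covariant derivative of `C` with respect to `Γ̂`. -/
def Chat {n : ℕ} (lam lamCov : Fin n → (Fin n → ℝ) → Fin n → ℝ)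
    (μ ν : Fin n) (x : Fin n → ℝ) : ℝ :=
  covD (symW lam lamCov) (Cvec lam lamCov) μ ν x

/-- The conformally invariant tensor `B^α_{μνσ}`. -/
def Btens {n : ℕ} (lam lamCov : Fin n → (Fin n → ℝ) → Fin n → ℝ)
    (α μ ν σ : Fin n) (x : Fin n → ℝ) : ℝ :=
  curv (symW lam lamCov) α μ ν σ x
    - (2 * ((n : ℝ) - 1))⁻¹ *
      (kron α μ * pd ν (Cvec lam lamCov σ) x - kron α μ * pd σ (Cvec lam lamCov ν) x
        + kron α σ * Chat lam lamCov μ ν x - kron α ν * Chat lam lamCov μ σ x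
        - (2 * ((n : ℝ) - 1))⁻¹ * kron α ν * Cvec lam lamCov μ x * Cvec lam lamCov σ x
        + (2 * ((n : ℝ) - 1))⁻¹ * kron α σ * Cvec lam lamCov μ x * Cvec lam lamCov ν x)

/-- `C^σ := g^{σε} C_ε`. -/
def Cup {n : ℕ} (lam lamCov : Fin n → (Fin n → ℝ) → Fin n → ℝ)
    (σ : Fin n) (x : Fin n → ℝ) : ℝ :=
  ∑ ε, ginv lam σ ε x * Cvec lam lamCov ε x

/-- `C² := C_ε C^ε = g^{εη} C_ε C_η`. -/
def Csq {n : ℕ} (lam lamCov : Fin n → (Fin n → ℝ) → Fin n → ℝ)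
    (x : Fin n → ℝ) : ℝ :=
  ∑ ε, Cvec lam lamCov ε x * Cup lam lamCov ε x

/-- The tensor `S_{μν} := ρ_{μ;ν} − ρ_μ ρ_ν − ½ g_{μν} ρ²`. -/
def Stens {n : ℕ} (lam lamCov : Fin n → (Fin n → ℝ) → Fin n → ℝ)
    (ρ : (Fin n → ℝ) → ℝ) (μ ν : Fin n) (x : Fin n → ℝ) : ℝ :=
  covD (LC lam lamCov) (fun μ => pd μ ρ) μ ν x
    - pd μ ρ x * pd ν ρ x - (1/2) * gmet lamCov μ ν x * rhoSq lam ρ x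

/-- The conformal connection `𝚪°^α_{μν} = Γ°^α_{μν} − (1/(n−1))(δ^α_μ C_ν + δ^α_ν C_μ − g_{μν} C^α)`. -/
def oConn {n : ℕ} (lam lamCov : Fin n → (Fin n → ℝ) → Fin n → ℝ)
    (α μ ν : Fin n) (x : Fin n → ℝ) : ℝ :=
  LC lam lamCov α μ ν x
    - ((n : ℝ) - 1)⁻¹ *
      (kron α μ * Cvec lam lamCov ν x + kron α ν * Cvec lam lamCov μ x
        - gmet lamCov μ ν x * Cup lam lamCov α x)

end


noncomputable section AuxProof

variable {n : ℕ}

lemma contDiff_pd {f : (Fin n → ℝ) → ℝ} (hf : ContDiff ℝ (⊤ : ℕ∞) f) (ν : Fin n) :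
    ContDiff ℝ (⊤ : ℕ∞) (pd ν f) :=
  (hf.fderiv_right (le_refl _)).clm_apply contDiff_const

lemma diffAt {f : (Fin n → ℝ) → ℝ} (hf : ContDiff ℝ (⊤ : ℕ∞) f) (x : Fin n → ℝ) :
    DifferentiableAt ℝ f x :=
  (hf.differentiable (by simp)).differentiableAt

lemma pd_add {f g : (Fin n → ℝ) → ℝ} {x : Fin n → ℝ} (ν : Fin n)
    (hf : DifferentiableAt ℝ f x) (hg : DifferentiableAt ℝ g x) :
    pd ν (fun y => f y + g y) x = pd ν f x + pd ν g x := by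
  unfold pd; rw [fderiv_fun_add hf hg]; rfl

lemma pd_mul {f g : (Fin n → ℝ) → ℝ} {x : Fin n → ℝ} (ν : Fin n)
    (hf : DifferentiableAt ℝ f x) (hg : DifferentiableAt ℝ g x) :
    pd ν (fun y => f y * g y) x = pd ν f x * g x + f x * pd ν g x := by
  unfold pd; rw [fderiv_fun_mul hf hg]; simp; ring

lemma pd_exp {f : (Fin n → ℝ) → ℝ} {x : Fin n → ℝ} (ν : Fin n)
    (hf : DifferentiableAt ℝ f x) :
    pd ν (fun y => Real.exp (f y)) x = Real.exp (f x) * pd ν f x := by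
  unfold pd; rw [fderiv_exp hf]; simp

lemma pd_const_mul {f : (Fin n → ℝ) → ℝ} {x : Fin n → ℝ} (ν : Fin n) (c : ℝ)
    (hf : DifferentiableAt ℝ f x) :
    pd ν (fun y => c * f y) x = c * pd ν f x := by
  unfold pd; rw [fderiv_const_mul hf]; simp

lemma pd_sum {ι : Type*} (s : Finset ι) (F : ι → (Fin n → ℝ) → ℝ) {x : Fin n → ℝ} (ν : Fin n)
    (hF : ∀ i ∈ s, DifferentiableAt ℝ (F i) x) :
    pd ν (fun y => ∑ i ∈ s, F i y) x = ∑ i ∈ s, pd ν (F i) x := by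
  unfold pd
  rw [fderiv_fun_sum hF]
  simp

-- kron sum evaluation
lemma kron_sum_left (α : Fin n) (f : Fin n → ℝ) : ∑ ε, kron α ε * f ε = f α := by
  simp [kron, ite_mul]

lemma kron_sum_right (α : Fin n) (f : Fin n → ℝ) : ∑ ε, kron ε α * f ε = f α := by
  simp [kron, ite_mul, eq_comm]

section Main
variable (lam lamCov : Fin n → (Fin n → ℝ) → Fin n → ℝ)
  (hlam : ∀ i μ, ContDiff ℝ (⊤ : ℕ∞) fun x => lam i x μ)
  (hlamCov : ∀ i μ, ContDiff ℝ (⊤ : ℕ∞) fun x => lamCov i x μ)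
  (hinv : ∀ (x : Fin n → ℝ) (μ ν : Fin n), ∑ i, lam i x μ * lamCov i x ν = kron μ ν)
  (hinv' : ∀ (x : Fin n → ℝ) (i j : Fin n), ∑ μ, lam i x μ * lamCov j x μ = kron i j)
  (ρ : (Fin n → ℝ) → ℝ) (hρ : ContDiff ℝ (⊤ : ℕ∞) ρ)

include hlam hlamCov in
lemma smooth_Wconn (α μ ν : Fin n) : ContDiff ℝ (⊤ : ℕ∞) (Wconn lam lamCov α μ ν) := by
  unfold Wconn
  exact ContDiff.sum fun i _ => (hlam i α).mul (contDiff_pd (hlamCov i μ) ν)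

include hlam hlamCov in
lemma smooth_Cvec (μ : Fin n) : ContDiff ℝ (⊤ : ℕ∞) (Cvec lam lamCov μ) := by
  unfold Cvec tors
  exact ContDiff.sum fun ε _ =>
    (smooth_Wconn lam lamCov hlam hlamCov ε ε μ).sub
      (smooth_Wconn lam lamCov hlam hlamCov ε μ ε)

include hlamCov in
lemma smooth_gmet (μ ν : Fin n) : ContDiff ℝ (⊤ : ℕ∞) (fun x => gmet lamCov μ ν x) := by
  unfold gmet
  exact ContDiff.sum fun i _ => (hlamCov i μ).mul (hlamCov i ν)

include hlam in
lemma smooth_ginv (μ ν : Fin n) : ContDiff ℝ (⊤ : ℕ∞) (fun x => ginv lam μ ν x) := by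
  unfold ginv
  exact ContDiff.sum fun i _ => (hlam i μ).mul (hlam i ν)

include hlam hlamCov in
lemma smooth_Cup (α : Fin n) : ContDiff ℝ (⊤ : ℕ∞) (Cup lam lamCov α) := by
  unfold Cup
  exact ContDiff.sum fun ε _ =>
    (smooth_ginv lam hlam α ε).mul (smooth_Cvec lam lamCov hlam hlamCov ε)

include hlam hρ in
lemma smooth_rhoUp (α : Fin n) : ContDiff ℝ (⊤ : ℕ∞) (rhoUp lam ρ α) := by
  unfold rhoUp
  exact ContDiff.sum fun ε _ => (smooth_ginv lam hlam α ε).mul (contDiff_pd hρ ε)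

-- metric contraction: g^{αε} g_{εν} = δ^α_ν
include hinv hinv' in
lemma ginv_gmet (x : Fin n → ℝ) (α ν : Fin n) :
    ∑ ε, ginv lam α ε x * gmet lamCov ε ν x = kron α ν := by
  unfold ginv gmet
  calc ∑ ε, (∑ i, lam i x α * lam i x ε) * ∑ j, lamCov j x ε * lamCov j x ν
      = ∑ ε, ∑ i, ∑ j, (lam i x α * lamCov j x ν) * (lam i x ε * lamCov j x ε) := by
        refine Finset.sum_congr rfl fun ε _ => ?_
        rw [Finset.sum_mul_sum]
        exact Finset.sum_congr rfl fun i _ => Finset.sum_congr rfl fun j _ => by ring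
    _ = ∑ i, ∑ j, ∑ ε, (lam i x α * lamCov j x ν) * (lam i x ε * lamCov j x ε) := by
        rw [Finset.sum_comm]
        exact Finset.sum_congr rfl fun i _ => Finset.sum_comm
    _ = ∑ i, ∑ j, (lam i x α * lamCov j x ν) * kron i j := by
        refine Finset.sum_congr rfl fun i _ => Finset.sum_congr rfl fun j _ => ?_
        rw [← Finset.mul_sum, hinv' x i j]
    _ = ∑ i, lam i x α * lamCov i x ν := by
        refine Finset.sum_congr rfl fun i _ => ?_
        simp [kron, mul_ite]
    _ = kron α ν := hinv x α ν


include hρ in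
lemma gmet_conf (x : Fin n → ℝ) (μ ν : Fin n) :
    gmet (confLamCov ρ lamCov) μ ν x = Real.exp (2 * ρ x) * gmet lamCov μ ν x := by
  unfold gmet confLamCov
  have h : Real.exp (2 * ρ x) = Real.exp (ρ x) * Real.exp (ρ x) := by
    rw [← Real.exp_add]; ring_nf
  rw [Finset.mul_sum]
  exact Finset.sum_congr rfl fun i _ => by rw [h]; ring

include hρ in
lemma ginv_conf (x : Fin n → ℝ) (μ ν : Fin n) :
    ginv (confLam ρ lam) μ ν x = Real.exp (-(2 * ρ x)) * ginv lam μ ν x := by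
  unfold ginv confLam
  have h : Real.exp (-(2 * ρ x)) = Real.exp (-(ρ x)) * Real.exp (-(ρ x)) := by
    rw [← Real.exp_add]; ring_nf
  rw [Finset.mul_sum]
  exact Finset.sum_congr rfl fun i _ => by rw [h]; ring

include hlamCov hinv hρ in
lemma Wconn_conf (x : Fin n → ℝ) (α μ ν : Fin n) :
    Wconn (confLam ρ lam) (confLamCov ρ lamCov) α μ ν x
      = Wconn lam lamCov α μ ν x + kron α μ * pd ν ρ x := by
  have hpd : ∀ i, pd ν (fun y => Real.exp (ρ y) * lamCov i y μ) x
      = Real.exp (ρ x) * pd ν ρ x * lamCov i x μ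
        + Real.exp (ρ x) * pd ν (fun y => lamCov i y μ) x := by
    intro i
    rw [pd_mul ν ((diffAt hρ x).exp) (diffAt (hlamCov i μ) x),
      pd_exp ν (diffAt hρ x)]
  have hone : Real.exp (-(ρ x)) * Real.exp (ρ x) = 1 := by
    rw [← Real.exp_add]; simp
  simp only [Wconn, confLam, confLamCov]
  calc ∑ i, Real.exp (-(ρ x)) * lam i x α *
        pd ν (fun y => Real.exp (ρ y) * lamCov i y μ) x
      = ∑ i, (lam i x α * lamCov i x μ * pd ν ρ x
          + lam i x α * pd ν (fun y => lamCov i y μ) x) := by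
        refine Finset.sum_congr rfl fun i _ => ?_
        rw [hpd i]
        calc Real.exp (-(ρ x)) * lam i x α *
              (Real.exp (ρ x) * pd ν ρ x * lamCov i x μ
                + Real.exp (ρ x) * pd ν (fun y => lamCov i y μ) x)
            = (Real.exp (-(ρ x)) * Real.exp (ρ x)) *
                (lam i x α * lamCov i x μ * pd ν ρ x
                  + lam i x α * pd ν (fun y => lamCov i y μ) x) := by ring
          _ = _ := by rw [hone, one_mul]
    _ = (∑ i, lam i x α * lamCov i x μ) * pd ν ρ x
          + ∑ i, lam i x α * pd ν (fun y => lamCov i y μ) x := by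
        rw [Finset.sum_add_distrib, Finset.sum_mul]
    _ = _ := by rw [hinv x α μ]; ring

include hlamCov hinv hρ in
lemma Cvec_conf (x : Fin n → ℝ) (μ : Fin n) :
    Cvec (confLam ρ lam) (confLamCov ρ lamCov) μ x
      = Cvec lam lamCov μ x + ((n : ℝ) - 1) * pd μ ρ x := by
  unfold Cvec tors
  simp only [Wconn_conf lam lamCov hlamCov hinv ρ hρ]
  have h1 : ∑ ε : Fin n, kron ε ε * pd μ ρ x = (n : ℝ) * pd μ ρ x := by
    simp [kron]
  have h2 : ∑ ε, kron ε μ * pd ε ρ x = pd μ ρ x := kron_sum_right μ _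
  calc ∑ ε, (Wconn lam lamCov ε ε μ x + kron ε ε * pd μ ρ x
        - (Wconn lam lamCov ε μ ε x + kron ε μ * pd ε ρ x))
      = (∑ ε, (Wconn lam lamCov ε ε μ x - Wconn lam lamCov ε μ ε x))
        + ((∑ ε : Fin n, kron ε ε * pd μ ρ x) - ∑ ε, kron ε μ * pd ε ρ x) := by
        rw [← Finset.sum_sub_distrib, ← Finset.sum_add_distrib]
        exact Finset.sum_congr rfl fun ε _ => by ring
    _ = _ := by rw [h1, h2]; ring

lemma ginv_symm (x : Fin n → ℝ) (μ ν : Fin n) : ginv lam μ ν x = ginv lam ν μ x :=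
  Finset.sum_congr rfl fun i _ => mul_comm _ _

include hinv hinv' in
lemma gmet_contract (f : Fin n → ℝ) (x : Fin n → ℝ) (ν : Fin n) :
    ∑ ε, gmet lamCov ε ν x * (∑ η, ginv lam ε η x * f η) = f ν := by
  have hs : ∀ ε, gmet lamCov ε ν x * (∑ η, ginv lam ε η x * f η)
      = ∑ η, (ginv lam η ε x * gmet lamCov ε ν x) * f η := by
    intro ε
    rw [Finset.mul_sum]
    exact Finset.sum_congr rfl fun η _ => by rw [ginv_symm lam x ε η]; ring
  rw [Finset.sum_congr rfl fun ε _ => hs ε, Finset.sum_comm]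
  calc ∑ η, ∑ ε, (ginv lam η ε x * gmet lamCov ε ν x) * f η
      = ∑ η, kron η ν * f η := by
        refine Finset.sum_congr rfl fun η _ => ?_
        rw [← Finset.sum_mul, ginv_gmet lam lamCov hinv hinv' x η ν]
    _ = f ν := kron_sum_right ν f

include hinv hinv' in
lemma gmet_Cup (x : Fin n → ℝ) (ν : Fin n) :
    ∑ ε, gmet lamCov ε ν x * Cup lam lamCov ε x = Cvec lam lamCov ν x :=
  gmet_contract lam lamCov hinv hinv' _ x ν

include hinv hinv' hρ in
lemma gmet_rhoUp (x : Fin n → ℝ) (ν : Fin n) :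
    ∑ ε, gmet lamCov ε ν x * rhoUp lam ρ ε x = pd ν ρ x :=
  gmet_contract lam lamCov hinv hinv' _ x ν

include hlamCov hinv hρ in
lemma Cup_conf (x : Fin n → ℝ) (α : Fin n) :
    Cup (confLam ρ lam) (confLamCov ρ lamCov) α x
      = Real.exp (-(2 * ρ x)) * (Cup lam lamCov α x + ((n : ℝ) - 1) * rhoUp lam ρ α x) := by
  unfold Cup
  simp only [ginv_conf lam ρ hρ, Cvec_conf lam lamCov hlamCov hinv ρ hρ]
  unfold rhoUp
  rw [mul_add, Finset.mul_sum, Finset.mul_sum, Finset.mul_sum, ← Finset.sum_add_distrib]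
  exact Finset.sum_congr rfl fun ε _ => by ring


include hlamCov hρ in
lemma pd_gmet_conf (x : Fin n → ℝ) (σ μ ν : Fin n) :
    pd σ (fun y => gmet (confLamCov ρ lamCov) μ ν y) x
      = Real.exp (2 * ρ x) * (2 * pd σ ρ x * gmet lamCov μ ν x
          + pd σ (fun y => gmet lamCov μ ν y) x) := by
  have hfun : (fun y => gmet (confLamCov ρ lamCov) μ ν y)
      = fun y => Real.exp (2 * ρ y) * gmet lamCov μ ν y :=
    funext fun y => gmet_conf lamCov ρ hρ y μ ν
  have h2ρ : ContDiff ℝ (⊤ : ℕ∞) fun y => 2 * ρ y := contDiff_const.mul hρ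
  rw [hfun, pd_mul σ (diffAt h2ρ.exp x) (diffAt (smooth_gmet lamCov hlamCov μ ν) x),
    pd_exp σ (diffAt h2ρ x), pd_const_mul σ 2 (diffAt hρ x)]
  ring

include hlamCov hinv hinv' hρ in
lemma LC_conf (x : Fin n → ℝ) (α μ ν : Fin n) :
    LC (confLam ρ lam) (confLamCov ρ lamCov) α μ ν x
      = LC lam lamCov α μ ν x + kron α μ * pd ν ρ x + kron α ν * pd μ ρ x
        - gmet lamCov μ ν x * rhoUp lam ρ α x := by
  have hone : Real.exp (-(2 * ρ x)) * Real.exp (2 * ρ x) = 1 := by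
    rw [← Real.exp_add]; simp
  unfold LC
  simp only [pd_gmet_conf lamCov hlamCov ρ hρ, ginv_conf lam ρ hρ]
  have key : ∀ ε, Real.exp (-(2 * ρ x)) * ginv lam α ε x *
      (Real.exp (2 * ρ x) * (2 * pd μ ρ x * gmet lamCov ε ν x
            + pd μ (fun y => gmet lamCov ε ν y) x)
        + Real.exp (2 * ρ x) * (2 * pd ν ρ x * gmet lamCov ε μ x
            + pd ν (fun y => gmet lamCov ε μ y) x)
        - Real.exp (2 * ρ x) * (2 * pd ε ρ x * gmet lamCov μ ν x
            + pd ε (fun y => gmet lamCov μ ν y) x))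
      = ginv lam α ε x * (pd μ (fun y => gmet lamCov ε ν y) x
            + pd ν (fun y => gmet lamCov ε μ y) x - pd ε (fun y => gmet lamCov μ ν y) x)
        + 2 * pd μ ρ x * (ginv lam α ε x * gmet lamCov ε ν x)
        + 2 * pd ν ρ x * (ginv lam α ε x * gmet lamCov ε μ x)
        - 2 * gmet lamCov μ ν x * (ginv lam α ε x * pd ε ρ x) := by
    intro ε
    calc _ = (Real.exp (-(2 * ρ x)) * Real.exp (2 * ρ x)) *
        (ginv lam α ε x * (pd μ (fun y => gmet lamCov ε ν y) x
            + pd ν (fun y => gmet lamCov ε μ y) x - pd ε (fun y => gmet lamCov μ ν y) x)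
          + 2 * pd μ ρ x * (ginv lam α ε x * gmet lamCov ε ν x)
          + 2 * pd ν ρ x * (ginv lam α ε x * gmet lamCov ε μ x)
          - 2 * gmet lamCov μ ν x * (ginv lam α ε x * pd ε ρ x)) := by ring
      _ = _ := by rw [hone, one_mul]
  simp only [key]
  have m1 : ∑ ε, 2 * pd μ ρ x * (ginv lam α ε x * gmet lamCov ε ν x)
      = 2 * pd μ ρ x * kron α ν := by
    rw [← Finset.mul_sum, ginv_gmet lam lamCov hinv hinv' x α ν]
  have m2 : ∑ ε, 2 * pd ν ρ x * (ginv lam α ε x * gmet lamCov ε μ x)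
      = 2 * pd ν ρ x * kron α μ := by
    rw [← Finset.mul_sum, ginv_gmet lam lamCov hinv hinv' x α μ]
  have m3 : ∑ ε, 2 * gmet lamCov μ ν x * (ginv lam α ε x * pd ε ρ x)
      = 2 * gmet lamCov μ ν x * rhoUp lam ρ α x := by
    rw [← Finset.mul_sum]; rfl
  rw [Finset.sum_sub_distrib, Finset.sum_add_distrib, Finset.sum_add_distrib, m1, m2, m3]
  ring

end Main
end AuxProof

theorem Cup_covDeriv_conformal_change
    {n : ℕ} (hn : 2 ≤ n)
    (lam lamCov : Fin n → (Fin n → ℝ) → Fin n → ℝ)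
    (hlam : ∀ i μ, ContDiff ℝ (⊤ : ℕ∞) fun x => lam i x μ)
    (hlamCov : ∀ i μ, ContDiff ℝ (⊤ : ℕ∞) fun x => lamCov i x μ)
    (hinv : ∀ (x : Fin n → ℝ) (μ ν : Fin n), ∑ i, lam i x μ * lamCov i x ν = kron μ ν)
    (hinv' : ∀ (x : Fin n → ℝ) (i j : Fin n), ∑ μ, lam i x μ * lamCov j x μ = kron i j)
    (ρ : (Fin n → ℝ) → ℝ) (hρ : ContDiff ℝ (⊤ : ℕ∞) ρ)
    :
    ∀ (x : Fin n → ℝ) (α ν : Fin n),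
      covDUp (LC (confLam ρ lam) (confLamCov ρ lamCov))
          (Cup (confLam ρ lam) (confLamCov ρ lamCov)) α ν x
        = Real.exp (-(2 * ρ x)) *
            (covDUp (LC lam lamCov) (Cup lam lamCov) α ν x
              + ((n : ℝ) - 1) * covDUp (LC lam lamCov) (rhoUp lam ρ) α ν x
              + (kron α ν * (∑ ε, Cup lam lamCov ε x * pd ε ρ x)
                  - Cup lam lamCov α x * pd ν ρ x - Cvec lam lamCov ν x * rhoUp lam ρ α x)
              + ((n : ℝ) - 1) *
                  (kron α ν * rhoSq lam ρ x - 2 * rhoUp lam ρ α x * pd ν ρ x)) := by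
  intro x α ν
  have hCupf : Cup (confLam ρ lam) (confLamCov ρ lamCov) α
      = fun y => Real.exp (-(2 * ρ y)) *
          (Cup lam lamCov α y + ((n : ℝ) - 1) * rhoUp lam ρ α y) :=
    funext fun y => Cup_conf lam lamCov hlamCov hinv ρ hρ y α
  have h2ρ : ContDiff ℝ (⊤ : ℕ∞) fun y => -(2 * ρ y) := (contDiff_const.mul hρ).neg
  have hCs := smooth_Cup lam lamCov hlam hlamCov α
  have hrs := smooth_rhoUp lam hlam ρ hρ α
  unfold covDUp
  rw [hCupf,
    pd_mul ν (diffAt h2ρ.exp x) (diffAt (hCs.add (contDiff_const.mul hrs)) x),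
    pd_exp ν (diffAt h2ρ x),
    pd_add ν (diffAt hCs x) (diffAt (contDiff_const.mul hrs) x),
    pd_const_mul ν ((n : ℝ) - 1) (diffAt hrs x)]
  have hneg : pd ν (fun y => -(2 * ρ y)) x = -(2 * pd ν ρ x) := by
    have h : (fun y => -(2 * ρ y)) = fun y => (-2) * ρ y := funext fun y => by ring
    rw [h, pd_const_mul ν (-2) (diffAt hρ x)]; ring
  rw [hneg]
  simp only [LC_conf lam lamCov hlamCov hinv hinv' ρ hρ,
    Cup_conf lam lamCov hlamCov hinv ρ hρ]
  have expand : ∑ ε, (LC lam lamCov α ε ν x + kron α ε * pd ν ρ x + kron α ν * pd ε ρ x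
        - gmet lamCov ε ν x * rhoUp lam ρ α x) *
        (Real.exp (-(2 * ρ x)) * (Cup lam lamCov ε x + ((n : ℝ) - 1) * rhoUp lam ρ ε x))
      = Real.exp (-(2 * ρ x)) * (∑ ε, LC lam lamCov α ε ν x * Cup lam lamCov ε x)
        + Real.exp (-(2 * ρ x)) * ((n : ℝ) - 1) *
            (∑ ε, LC lam lamCov α ε ν x * rhoUp lam ρ ε x)
        + Real.exp (-(2 * ρ x)) * pd ν ρ x * (∑ ε, kron α ε * Cup lam lamCov ε x)
        + Real.exp (-(2 * ρ x)) * ((n : ℝ) - 1) * pd ν ρ x *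
            (∑ ε, kron α ε * rhoUp lam ρ ε x)
        + Real.exp (-(2 * ρ x)) * kron α ν * (∑ ε, Cup lam lamCov ε x * pd ε ρ x)
        + Real.exp (-(2 * ρ x)) * ((n : ℝ) - 1) * kron α ν *
            (∑ ε, rhoUp lam ρ ε x * pd ε ρ x)
        - Real.exp (-(2 * ρ x)) * rhoUp lam ρ α x *
            (∑ ε, gmet lamCov ε ν x * Cup lam lamCov ε x)
        - Real.exp (-(2 * ρ x)) * ((n : ℝ) - 1) * rhoUp lam ρ α x *
            (∑ ε, gmet lamCov ε ν x * rhoUp lam ρ ε x) := by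
    simp only [Finset.mul_sum]
    rw [← Finset.sum_add_distrib, ← Finset.sum_add_distrib, ← Finset.sum_add_distrib,
      ← Finset.sum_add_distrib, ← Finset.sum_add_distrib, ← Finset.sum_sub_distrib,
      ← Finset.sum_sub_distrib]
    exact Finset.sum_congr rfl fun ε _ => by ring
  rw [expand, kron_sum_left α, kron_sum_left α,
    gmet_Cup lam lamCov hinv hinv' x ν, gmet_rhoUp lam lamCov hinv hinv' ρ hρ x ν,
    show rhoSq lam ρ x = ∑ ε, rhoUp lam ρ ε x * pd ε ρ x from rfl]
  ring
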